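/- arXiv:2008.08079 — 2 statements merged into one kernel-verified Lean document; each statement's English description precedes it below -/
import Mathlib

section
/- For n, k ∈ ℕ₀ set B_n(k) = [b_{n+k+1} − P_1(1−q^n)] · q^k / c_{n+k+1}. Then: (i) B_n(k) > (1 − 2q^{k+1})/q for all n, k ∈ ℕ₀; (ii) in particular, if K is the least natural number with q^{K+1} ≤ 1/4, then B_n(k) > 1/(2q) for all n ∈ ℕ₀ and all k ≥ K; and (iii) for every n ∈ ℕ₀, lim_{k→∞} B_n(k) = 1/q. -/
open scoped BigOperators

/-- Recurrence coefficient `a_n` of the little q-Legendre polynomials. -/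
noncomputable def aC (q : ℝ) : ℕ → ℝ
  | 0 => 1 / (q + 1)
  | n + 1 => q ^ (n + 1) * (1 + q) * (1 - q ^ (n + 2)) /
      ((1 - q ^ (2 * n + 3)) * (1 + q ^ (n + 2)))

/-- Recurrence coefficient `c_n` of the little q-Legendre polynomials. -/
noncomputable def cC (q : ℝ) : ℕ → ℝ
  | 0 => 0
  | n + 1 => q ^ (n + 1) * (1 + q) * (1 - q ^ (n + 1)) /
      ((1 - q ^ (2 * n + 3)) * (1 + q ^ (n + 1)))

/-- Recurrence coefficient `b_n = 1 - a_n - c_n`. -/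
noncomputable def bC (q : ℝ) (n : ℕ) : ℝ := 1 - aC q n - cC q n

/-- The little q-Legendre polynomials, as functions `ℝ → ℝ`:
`P 0 x = 1`, `P 1 x = (q+1)x - q`, and
`P 1 x * P (n+1) x = a_{n+1} P (n+2) x + b_{n+1} P (n+1) x + c_{n+1} P n x`. -/
noncomputable def P (q : ℝ) : ℕ → ℝ → ℝ
  | 0, _ => 1
  | 1, x => (q + 1) * x - q
  | n + 2, x =>
      (((q + 1) * x - q) * P q (n + 1) x - bC q (n + 1) * P q (n + 1) x
        - cC q (n + 1) * P q n x) / aC q (n + 1)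

/-- Haar weights of the little q-Legendre hypergroup. -/
noncomputable def haar (q : ℝ) (n : ℕ) : ℝ := (1 - q ^ (2 * n + 1)) / (q ^ n * (1 - q))

/-- Finite q-Pochhammer symbol `(a;q)_m`. -/
noncomputable def qpoch (q A : ℝ) (m : ℕ) : ℝ := ∏ j ∈ Finset.range m, (1 - A * q ^ j)

/-- Infinite q-Pochhammer symbol `(a;q)_∞`. -/
noncomputable def qpochInf (q A : ℝ) : ℝ := ∏' j : ℕ, (1 - A * q ^ j)

/-!
Put `x = q ^ (n + k + 1)` and `t = q ^ k`. Since `q ^ n = x / (q t)`, the explicit formulas for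
`a_m, c_m` turn `B_n(k)` into a rational function of `q, x, t` whose value at `x = t = 0` is `1 / q`;
this gives the limit. Its excess over `(1 - 2 q t) / q` is `x / (q (1 - x) (1 + q x))` times
`(2 - q x - q x²)(1 + q x) - 2 q (1 - q) t ≥ (1 - q)(2 + q²) > 0`, which gives the lower bound,
and `q ^ (k + 1) ≤ 1/4` turns it into `1 / (2 q)`.
-/

open Filter Topology

noncomputable def ratioForm (q x t : ℝ) : ℝ :=
  (1 - q * x ^ 2) * (1 + x) / (q * (1 - x))
    - t * ((1 - q * x) * (1 + x) / ((1 + q * x) * (1 - x)) + 1)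

lemma aC_succ {q : ℝ} (m : ℕ) :
    aC q (m + 1) = q ^ (m + 1) * (1 + q) * (1 - q * q ^ (m + 1)) /
      ((1 - q * (q ^ (m + 1)) ^ 2) * (1 + q * q ^ (m + 1))) := by
  simp only [aC]; ring_nf

lemma cC_succ {q : ℝ} (m : ℕ) :
    cC q (m + 1) = q ^ (m + 1) * (1 + q) * (1 - q ^ (m + 1)) /
      ((1 - q * (q ^ (m + 1)) ^ 2) * (1 + q ^ (m + 1))) := by
  simp only [cC]; ring_nf

lemma ratio_eq_ratioForm {q : ℝ} (hq0 : 0 < q) (hq1 : q < 1) (n k : ℕ) :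
    (bC q (n + k + 1) - P q 1 (1 - q ^ n)) * q ^ k / cC q (n + k + 1)
      = ratioForm q (q ^ (n + k + 1)) (q ^ k) := by
  rw [bC, aC_succ, cC_succ, ratioForm, P, show q ^ (n + k + 1) = q * q ^ n * q ^ k by ring]
  have hs0 : 0 < q ^ n := pow_pos hq0 n
  have ht0 : 0 < q ^ k := pow_pos hq0 k
  have hx1 : q * q ^ n * q ^ k < 1 := by
    rw [← pow_succ', ← pow_add]; exact pow_lt_one₀ hq0.le hq1 (by omega)
  generalize q ^ n = s at *
  generalize q ^ k = t at *
  have hx0 : 0 < q * s * t := by positivity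
  have hden1 : 1 - q * s * t ≠ 0 := by linarith
  have hden2 : 1 - q ^ 3 * s ^ 2 * t ^ 2 ≠ 0 := by
    have := mul_lt_one_of_nonneg_of_lt_one_left hq0.le hq1 (pow_lt_one₀ hx0.le hx1 two_ne_zero).le
    nlinarith
  field_simp
  ring

lemma ratioForm_sub_eq {q x : ℝ} (t : ℝ) (hq : q ≠ 0) (hx : x ≠ 1) (hqx : 1 + q * x ≠ 0) :
    ratioForm q x t - (1 - 2 * q * t) / q
      = x * ((2 - q * x - q * x ^ 2) * (1 + q * x) - 2 * q * (1 - q) * t)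
        / (q * (1 - x) * (1 + q * x)) := by
  have : 1 - x ≠ 0 := sub_ne_zero.2 hx.symm
  rw [ratioForm]
  field_simp
  ring

lemma lt_ratioForm {q x t : ℝ} (hq0 : 0 < q) (hq1 : q < 1) (hx0 : 0 < x) (hxq : x ≤ q)
    (ht1 : t ≤ 1) :
    (1 - 2 * q * t) / q < ratioForm q x t := by
  have hqx : 0 < 1 + q * x := by positivity
  have hx1 : 0 < 1 - x := by linarith
  -- the numerator is `≥ 2 - q² - q³ - 2q(1 - q) = (1 - q)(2 + q²)`
  have hnum : 0 < (2 - q * x - q * x ^ 2) * (1 + q * x) - 2 * q * (1 - q) * t := by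
    have h1 : q * x + q * x ^ 2 ≤ q ^ 2 + q ^ 3 := by
      have := pow_le_pow_left₀ hx0.le hxq 2
      nlinarith
    have h2 : 2 * q * (1 - q) * t ≤ 2 * q * (1 - q) :=
      mul_le_of_le_one_right (by nlinarith) ht1
    nlinarith [mul_nonneg (mul_nonneg hq0.le hx0.le) (by nlinarith : 0 ≤ 2 - q * x - q * x ^ 2)]
  have hdiff : 0 < ratioForm q x t - (1 - 2 * q * t) / q := by
    rw [ratioForm_sub_eq t hq0.ne' (by linarith) hqx.ne']
    positivity
  exact sub_pos.1 hdiff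

lemma tendsto_ratioForm (q c : ℝ) (hq : q ≠ 0) :
    Tendsto (fun t => ratioForm q (c * t) t) (𝓝 0) (𝓝 (1 / q)) := by
  have hcont : ContinuousAt (fun t => ratioForm q (c * t) t) 0 := by
    unfold ratioForm
    fun_prop (disch := simp [hq])
  simpa [ratioForm] using hcont.tendsto

/-- with `B_n(k) = [b_{n+k+1} - P₁(1-qⁿ)] qᵏ / c_{n+k+1}`:
(i) `B_n(k) > (1-2q^{k+1})/q` for all `n, k`; (ii) `B_n(k) > 1/(2q)` for `k ≥ K`;
(iii) `B_n(k) → 1/q` as `k → ∞`. -/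
theorem stmt8 (q : ℝ) (hq0 : 0 < q) (hq1 : q < 1) :
    (∀ n k : ℕ,
      (bC q (n + k + 1) - P q 1 (1 - q ^ n)) * q ^ k / cC q (n + k + 1) >
        (1 - 2 * q ^ (k + 1)) / q) ∧
    (∀ K : ℕ, q ^ (K + 1) ≤ 1 / 4 → (∀ m : ℕ, m < K → ¬ (q ^ (m + 1) ≤ 1 / 4)) →
      ∀ n k : ℕ, K ≤ k →
        (bC q (n + k + 1) - P q 1 (1 - q ^ n)) * q ^ k / cC q (n + k + 1) > 1 / (2 * q)) ∧
    (∀ n : ℕ, Filter.Tendsto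
      (fun k : ℕ => (bC q (n + k + 1) - P q 1 (1 - q ^ n)) * q ^ k / cC q (n + k + 1))
      Filter.atTop (nhds (1 / q))) := by
  have lower (n k : ℕ) :
      (bC q (n + k + 1) - P q 1 (1 - q ^ n)) * q ^ k / cC q (n + k + 1) >
        (1 - 2 * q ^ (k + 1)) / q := by
    rw [ratio_eq_ratioForm hq0 hq1, pow_succ' q k, ← mul_assoc]
    refine lt_ratioForm hq0 hq1 (pow_pos hq0 _) ?_ (pow_le_one₀ hq0.le hq1.le)
    exact pow_le_of_le_one hq0.le hq1.le (by omega)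
  refine ⟨lower, fun K hK _ n k hk => ?_, fun n => ?_⟩
  · have hqk : q ^ (k + 1) ≤ 1 / 4 := (pow_le_pow_of_le_one hq0.le hq1.le (by omega)).trans hK
    refine lt_of_le_of_lt ?_ (lower n k)
    rw [div_le_div_iff₀ (by positivity) hq0]
    nlinarith [mul_le_mul_of_nonneg_left hqk hq0.le]
  · have hform (k : ℕ) : ratioForm q (q ^ (n + 1) * q ^ k) (q ^ k)
        = (bC q (n + k + 1) - P q 1 (1 - q ^ n)) * q ^ k / cC q (n + k + 1) := by
      rw [ratio_eq_ratioForm hq0 hq1, ← pow_add, Nat.add_right_comm]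
    exact ((tendsto_ratioForm q _ hq0.ne').comp
      (tendsto_pow_atTop_nhds_zero_of_lt_one hq0.le hq1)).congr hform
end

section
/- The set { h(n)² · ∑_{j=0}^∞ (1−q) q^j (P_n(1−q^j))⁴ : n ∈ ℕ₀ } is unbounded; equivalently, the fourth moments ∫ p_n⁴ dμ of the orthonormal little q-Legendre polynomials p_n = √(h(n)) P_n with respect to their orthogonalization measure μ (the discrete measure with μ({1−q^j}) = q^j(1−q) for j ∈ ℕ₀) do not form a bounded sequence. -/
open scoped BigOperators

section Aux

variable {q : ℝ}

lemma aC_succ_pos (hq0 : 0 < q) (hq1 : q < 1) (n : ℕ) : 0 < aC q (n + 1) := by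
  have h1 : q ^ (n + 2) < 1 := pow_lt_one₀ hq0.le hq1 (by omega)
  have h2 : q ^ (2 * n + 3) < 1 := pow_lt_one₀ hq0.le hq1 (by omega)
  have h3 : 0 < q ^ (n + 1) := pow_pos hq0 _
  have h4 : 0 < q ^ (n + 2) := pow_pos hq0 _
  unfold aC
  apply div_pos
  · apply mul_pos (mul_pos h3 (by linarith)) (by linarith)
  · exact mul_pos (by linarith) (by linarith)

lemma cC_succ_nonneg (hq0 : 0 < q) (hq1 : q < 1) (n : ℕ) : 0 ≤ cC q (n + 1) := by
  have h1 : q ^ (n + 1) ≤ 1 := pow_le_one₀ hq0.le hq1.le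
  have h2 : q ^ (2 * n + 3) < 1 := pow_lt_one₀ hq0.le hq1 (by omega)
  have h3 : 0 < q ^ (n + 1) := pow_pos hq0 _
  unfold cC
  apply div_nonneg
  · apply mul_nonneg (mul_nonneg h3.le (by linarith)) (by linarith)
  · apply mul_nonneg (by linarith) (by linarith)

lemma cC_le_aC (hq0 : 0 < q) (hq1 : q < 1) (n : ℕ) : cC q (n + 1) ≤ aC q (n + 1) := by
  have h1 : q ^ (n + 2) < 1 := pow_lt_one₀ hq0.le hq1 (by omega)
  have h2 : q ^ (2 * n + 3) < 1 := pow_lt_one₀ hq0.le hq1 (by omega)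
  have h3 : 0 < q ^ (n + 1) := pow_pos hq0 _
  have h4 : 0 < q ^ (n + 2) := pow_pos hq0 _
  have h5 : q ^ (n + 2) ≤ q ^ (n + 1) := pow_le_pow_of_le_one hq0.le hq1.le (by omega)
  have h6 : q ^ (n + 1) < 1 := pow_lt_one₀ hq0.le hq1 (by omega)
  unfold aC cC
  rw [div_le_div_iff₀ (by exact mul_pos (by linarith) (by linarith))
    (by exact mul_pos (by linarith) (by linarith))]
  have key : (1 - q ^ (n + 1)) * (1 + q ^ (n + 2)) ≤ (1 - q ^ (n + 2)) * (1 + q ^ (n + 1)) := by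
    nlinarith
  have hF : 0 ≤ q ^ (n + 1) * (1 + q) * (1 - q ^ (2 * n + 3)) := by
    apply mul_nonneg (mul_nonneg h3.le (by linarith)) (by linarith)
  nlinarith [mul_le_mul_of_nonneg_left key hF]

lemma aC_ge (hq0 : 0 < q) (hq1 : q < 1) (n : ℕ) :
    q ^ (n + 1) * (1 - q ^ 2) / 2 ≤ aC q (n + 1) := by
  have h1 : q ^ (n + 2) < 1 := pow_lt_one₀ hq0.le hq1 (by omega)
  have h2 : q ^ (2 * n + 3) < 1 := pow_lt_one₀ hq0.le hq1 (by omega)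
  have h2' : 0 < q ^ (2 * n + 3) := pow_pos hq0 _
  have h3 : 0 < q ^ (n + 1) := pow_pos hq0 _
  have h4 : 0 < q ^ (n + 2) := pow_pos hq0 _
  have h5 : q ^ (n + 2) ≤ q := by
    calc q ^ (n + 2) ≤ q ^ 1 := pow_le_pow_of_le_one hq0.le hq1.le (by omega)
    _ = q := pow_one q
  unfold aC
  rw [div_le_div_iff₀ (by norm_num) (by exact mul_pos (by linarith) (by linarith))]
  have hq2 : (0:ℝ) < 1 - q ^ 2 := by nlinarith
  have A1 : (1 - q ^ (2 * n + 3)) * (1 + q ^ (n + 2)) ≤ 2 := by nlinarith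
  have A2 : 1 - q ≤ 1 - q ^ (n + 2) := by linarith
  calc q ^ (n + 1) * (1 - q ^ 2) * ((1 - q ^ (2 * n + 3)) * (1 + q ^ (n + 2)))
      ≤ q ^ (n + 1) * (1 - q ^ 2) * 2 := by
        nlinarith [mul_pos h3 hq2]
    _ ≤ q ^ (n + 1) * (1 + q) * (1 - q ^ (n + 2)) * 2 := by
        nlinarith [mul_le_mul_of_nonneg_left A2 (by positivity : (0:ℝ) ≤ q ^ (n + 1) * (1 + q))]

lemma P_rec (hq0 : 0 < q) (hq1 : q < 1) (n : ℕ) (x : ℝ) :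
    aC q (n + 1) * P q (n + 2) x =
      ((q + 1) * x - q) * P q (n + 1) x - bC q (n + 1) * P q (n + 1) x
        - cC q (n + 1) * P q n x := by
  have ha : aC q (n + 1) ≠ 0 := (aC_succ_pos hq0 hq1 n).ne'
  rw [show P q (n + 2) x =
      (((q + 1) * x - q) * P q (n + 1) x - bC q (n + 1) * P q (n + 1) x
        - cC q (n + 1) * P q n x) / aC q (n + 1) from rfl]
  field_simp

set_option maxHeartbeats 1000000 in
lemma key (hq0 : 0 < q) (hq1 : q < 1) (ε : ℝ) (hε : 0 ≤ ε) :
    ∀ m : ℕ, 8 / (1 - q) ^ 3 * ε ≤ q ^ m →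
      q ^ m * |1 - P q m (1 - ε)| ≤ 8 / (1 - q) ^ 3 * ε ∧
      q ^ m * |P q (m + 1) (1 - ε) - P q m (1 - ε)| ≤ 8 / (1 - q) ^ 2 * ε := by
  have h1q : (0:ℝ) < 1 - q := by linarith
  have hA : (0:ℝ) < 8 / (1 - q) ^ 2 := by positivity
  have hB : (0:ℝ) < 8 / (1 - q) ^ 3 := by positivity
  have hAB : 8 / (1 - q) ^ 2 = (1 - q) * (8 / (1 - q) ^ 3) := by
    field_simp
  intro m
  induction m with
  | zero =>
    intro _
    constructor
    · simp only [pow_zero, one_mul]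
      show |1 - P q 0 (1 - ε)| ≤ _
      simp only [P, sub_self, abs_zero]
      positivity
    · have e1 : P q 1 (1 - ε) - P q 0 (1 - ε) = -((q + 1) * ε) := by
        simp [P]; ring
      rw [pow_zero, one_mul, e1, abs_neg, abs_of_nonneg (by nlinarith)]
      have : q + 1 ≤ 8 / (1 - q) ^ 2 := by
        rw [le_div_iff₀ (by positivity)]; nlinarith
      nlinarith
  | succ m ih =>
    intro h
    have hqm : q ^ (m + 1) ≤ q ^ m := pow_le_pow_of_le_one hq0.le hq1.le (by omega)
    have hqm1 : (0:ℝ) < q ^ (m + 1) := pow_pos hq0 _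
    have hqm0 : (0:ℝ) < q ^ m := pow_pos hq0 _
    obtain ⟨hD, hE⟩ := ih (le_trans h hqm)
    have hBε : 0 ≤ 8 / (1 - q) ^ 3 * ε := by positivity
    -- Goal 1
    have goal1 : q ^ (m + 1) * |1 - P q (m + 1) (1 - ε)| ≤ 8 / (1 - q) ^ 3 * ε := by
      have tri : |1 - P q (m + 1) (1 - ε)| ≤ |1 - P q m (1 - ε)| +
          |P q (m + 1) (1 - ε) - P q m (1 - ε)| := by
        have := abs_sub (1 - P q m (1 - ε)) (P q (m + 1) (1 - ε) - P q m (1 - ε))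
        calc |1 - P q (m + 1) (1 - ε)|
            = |(1 - P q m (1 - ε)) - (P q (m + 1) (1 - ε) - P q m (1 - ε))| := by ring_nf
          _ ≤ _ := abs_sub _ _
      have step : q ^ (m + 1) * |1 - P q (m + 1) (1 - ε)| ≤
          q * (8 / (1 - q) ^ 3 * ε + 8 / (1 - q) ^ 2 * ε) := by
        have e : q ^ (m + 1) = q * q ^ m := by ring
        rw [e, mul_assoc]
        apply mul_le_mul_of_nonneg_left _ hq0.le
        calc q ^ m * |1 - P q (m + 1) (1 - ε)| ≤
            q ^ m * (|1 - P q m (1 - ε)| + |P q (m + 1) (1 - ε) - P q m (1 - ε)|) :=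
              mul_le_mul_of_nonneg_left tri hqm0.le
          _ = q ^ m * |1 - P q m (1 - ε)| + q ^ m * |P q (m + 1) (1 - ε) - P q m (1 - ε)| := by
              ring
          _ ≤ _ := by linarith
      refine step.trans ?_
      rw [hAB]
      nlinarith [sq_nonneg (1 - q), mul_nonneg hB.le hε]
    refine ⟨goal1, ?_⟩
    -- Goal 2
    have hP1 : |P q (m + 1) (1 - ε)| ≤ 2 := by
      have h1 : |1 - P q (m + 1) (1 - ε)| ≤ 1 := by
        by_contra hc
        push_neg at hc
        have : q ^ (m + 1) * 1 < q ^ (m + 1) * |1 - P q (m + 1) (1 - ε)| :=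
          (mul_lt_mul_iff_right₀ hqm1).mpr hc
        nlinarith
      have := abs_sub_abs_le_abs_sub (P q (m + 1) (1 - ε)) 1
      rw [abs_sub_comm] at this
      simp only [abs_one] at this
      linarith
    have ha := aC_succ_pos hq0 hq1 m
    have hc0 := cC_succ_nonneg hq0 hq1 m
    have hca := cC_le_aC hq0 hq1 m
    have haq := aC_ge hq0 hq1 m
    have hrec := P_rec hq0 hq1 m (1 - ε)
    unfold bC at hrec
    have key2 : aC q (m + 1) * (P q (m + 2) (1 - ε) - P q (m + 1) (1 - ε)) =
        cC q (m + 1) * (P q (m + 1) (1 - ε) - P q m (1 - ε)) - (q + 1) * ε * P q (m + 1) (1 - ε) := by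
      linear_combination hrec
    -- |a * E2| ≤ c * |E1| + (q+1) ε |Pm1|
    have habs : aC q (m + 1) * |P q (m + 2) (1 - ε) - P q (m + 1) (1 - ε)| ≤
        cC q (m + 1) * |P q (m + 1) (1 - ε) - P q m (1 - ε)| + (q + 1) * ε * 2 := by
      have e1 : aC q (m + 1) * |P q (m + 2) (1 - ε) - P q (m + 1) (1 - ε)| =
          |aC q (m + 1) * (P q (m + 2) (1 - ε) - P q (m + 1) (1 - ε))| := by
        rw [abs_mul, abs_of_pos ha]
      rw [e1, key2]
      calc |cC q (m + 1) * (P q (m + 1) (1 - ε) - P q m (1 - ε)) - (q + 1) * ε * P q (m + 1) (1 - ε)|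
          ≤ |cC q (m + 1) * (P q (m + 1) (1 - ε) - P q m (1 - ε))| + |(q + 1) * ε * P q (m + 1) (1 - ε)| :=
            abs_sub _ _
        _ ≤ cC q (m + 1) * |P q (m + 1) (1 - ε) - P q m (1 - ε)| + (q + 1) * ε * 2 := by
            rw [abs_mul, abs_mul, abs_of_nonneg hc0, abs_mul,
              abs_of_nonneg (by linarith : (0:ℝ) ≤ q + 1), abs_of_nonneg hε]
            have := mul_le_mul_of_nonneg_left hP1 (by positivity : (0:ℝ) ≤ (q + 1) * ε)
            linarith
    -- multiply both sides by q^{m+1} and divide by a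
    have main : aC q (m + 1) * (q ^ (m + 1) * |P q (m + 2) (1 - ε) - P q (m + 1) (1 - ε)|) ≤
        aC q (m + 1) * (8 / (1 - q) ^ 2 * ε) := by
      have t1 : q ^ (m + 1) * (cC q (m + 1) * |P q (m + 1) (1 - ε) - P q m (1 - ε)|) ≤
          aC q (m + 1) * (q * (8 / (1 - q) ^ 2 * ε)) := by
        have e2 : |P q (m + 1) (1 - ε) - P q m (1 - ε)| ≥ 0 := abs_nonneg _
        have s1 : q ^ (m + 1) * (cC q (m + 1) * |P q (m + 1) (1 - ε) - P q m (1 - ε)|) ≤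
            q ^ (m + 1) * (aC q (m + 1) * |P q (m + 1) (1 - ε) - P q m (1 - ε)|) := by
          apply mul_le_mul_of_nonneg_left _ hqm1.le
          exact mul_le_mul_of_nonneg_right hca e2
        have s2 : q ^ (m + 1) * (aC q (m + 1) * |P q (m + 1) (1 - ε) - P q m (1 - ε)|) =
            aC q (m + 1) * (q * (q ^ m * |P q (m + 1) (1 - ε) - P q m (1 - ε)|)) := by ring
        rw [s2] at s1
        refine s1.trans ?_
        apply mul_le_mul_of_nonneg_left _ ha.le
        exact mul_le_mul_of_nonneg_left hE hq0.le
      have t2 : q ^ (m + 1) * ((q + 1) * ε * 2) ≤ aC q (m + 1) * (4 * ε / (1 - q)) := by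
        -- q^{m+1} ≤ 2 a / (1-q^2), so q^{m+1} 2(q+1) ε ≤ 4 a (q+1) ε/(1-q²) = 4 a ε/(1-q)
        have hq2 : (0:ℝ) < 1 - q ^ 2 := by nlinarith
        have h5 : q ^ (m + 1) ≤ 2 * aC q (m + 1) / (1 - q ^ 2) := by
          rw [le_div_iff₀ hq2]
          nlinarith
        have h6 : q ^ (m + 1) * ((q + 1) * ε * 2) ≤
            (2 * aC q (m + 1) / (1 - q ^ 2)) * ((q + 1) * ε * 2) := by
          apply mul_le_mul_of_nonneg_right h5 (by positivity)
        refine h6.trans (le_of_eq ?_)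
        have : (1 - q ^ 2) = (1 - q) * (1 + q) := by ring
        field_simp
        ring
      have expand : aC q (m + 1) * (q ^ (m + 1) * |P q (m + 2) (1 - ε) - P q (m + 1) (1 - ε)|) =
          q ^ (m + 1) * (aC q (m + 1) * |P q (m + 2) (1 - ε) - P q (m + 1) (1 - ε)|) := by ring
      rw [expand]
      have s3 : q ^ (m + 1) * (aC q (m + 1) * |P q (m + 2) (1 - ε) - P q (m + 1) (1 - ε)|) ≤
          q ^ (m + 1) * (cC q (m + 1) * |P q (m + 1) (1 - ε) - P q m (1 - ε)| + (q + 1) * ε * 2) := by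
        exact mul_le_mul_of_nonneg_left habs hqm1.le
      have s4 : aC q (m + 1) * (q * (8 / (1 - q) ^ 2 * ε)) + aC q (m + 1) * (4 * ε / (1 - q)) ≤
          aC q (m + 1) * (8 / (1 - q) ^ 2 * ε) := by
        rw [← mul_add]
        apply mul_le_mul_of_nonneg_left _ ha.le
        -- q * A ε + 4 ε/(1-q) ≤ A ε  where A = 8/(1-q)^2
        have e1 : q * (8 / (1 - q) ^ 2 * ε) = 8 * q * ε / (1 - q) ^ 2 := by ring
        have e2 : 4 * ε / (1 - q) = 4 * ε * (1 - q) / (1 - q) ^ 2 := by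
          rw [div_eq_div_iff (by linarith) (by positivity)]; ring
        have e3 : 8 / (1 - q) ^ 2 * ε = (8 * ε) / (1 - q) ^ 2 := by ring
        rw [e1, e2, e3, ← add_div]
        rw [div_le_div_iff₀ (by positivity) (by positivity)]
        nlinarith [mul_nonneg hε h1q.le, sq_nonneg (1-q)]
      calc q ^ (m + 1) * (aC q (m + 1) * |P q (m + 2) (1 - ε) - P q (m + 1) (1 - ε)|)
          ≤ q ^ (m + 1) * (cC q (m + 1) * |P q (m + 1) (1 - ε) - P q m (1 - ε)|) +
            q ^ (m + 1) * ((q + 1) * ε * 2) := by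
              rw [← mul_add]; exact s3
        _ ≤ aC q (m + 1) * (q * (8 / (1 - q) ^ 2 * ε)) + aC q (m + 1) * (4 * ε / (1 - q)) := by
            linarith
        _ ≤ _ := s4
    exact le_of_mul_le_mul_left main ha

lemma bddP (hq0 : 0 < q) (hq1 : q < 1) :
    ∀ n : ℕ, ∃ M : ℝ, 0 ≤ M ∧ ∀ x : ℝ, 0 ≤ x → x ≤ 1 →
      |P q n x| ≤ M ∧ |P q (n + 1) x| ≤ M := by
  intro n
  induction n with
  | zero =>
    refine ⟨q + 1, by linarith, fun x hx0 hx1 => ?_⟩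
    constructor
    · simp only [P, abs_one]; linarith
    · show |(q + 1) * x - q| ≤ q + 1
      rw [abs_le]
      constructor <;> nlinarith
  | succ n ih =>
    obtain ⟨M, hM0, hM⟩ := ih
    have ha := aC_succ_pos hq0 hq1 n
    refine ⟨max M ((2 * (q + 1) + |bC q (n + 1)| + cC q (n + 1)) * M / aC q (n + 1)),
      le_trans hM0 (le_max_left _ _), fun x hx0 hx1 => ?_⟩
    obtain ⟨h1, h2⟩ := hM x hx0 hx1
    constructor
    · exact le_trans h2 (le_max_left _ _)
    · refine le_trans ?_ (le_max_right _ _)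
      have e : P q (n + 2) x = (((q + 1) * x - q) * P q (n + 1) x
          - bC q (n + 1) * P q (n + 1) x - cC q (n + 1) * P q n x) / aC q (n + 1) := rfl
      rw [e, abs_div, abs_of_pos ha, div_le_div_iff₀ ha ha]
      have hx : |(q + 1) * x - q| ≤ q + 1 := by
        rw [abs_le]; constructor <;> nlinarith
      have hc0 := cC_succ_nonneg hq0 hq1 n
      have t1 : |((q + 1) * x - q) * P q (n + 1) x - bC q (n + 1) * P q (n + 1) x
          - cC q (n + 1) * P q n x| ≤ (q + 1) * M + |bC q (n + 1)| * M + cC q (n + 1) * M := by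
        calc |((q + 1) * x - q) * P q (n + 1) x - bC q (n + 1) * P q (n + 1) x
            - cC q (n + 1) * P q n x|
            ≤ |((q + 1) * x - q) * P q (n + 1) x| + |bC q (n + 1) * P q (n + 1) x|
              + |cC q (n + 1) * P q n x| := by
              refine le_trans (abs_sub _ _) ?_
              have := abs_sub (((q + 1) * x - q) * P q (n + 1) x)
                (bC q (n + 1) * P q (n + 1) x)
              linarith
          _ ≤ (q + 1) * M + |bC q (n + 1)| * M + cC q (n + 1) * M := by
              rw [abs_mul, abs_mul, abs_mul, abs_of_nonneg hc0]
              have b1 : |(q + 1) * x - q| * |P q (n + 1) x| ≤ (q + 1) * M := by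
                apply mul_le_mul hx h2 (abs_nonneg _) (by linarith)
              have b2 : |bC q (n + 1)| * |P q (n + 1) x| ≤ |bC q (n + 1)| * M :=
                mul_le_mul_of_nonneg_left h2 (abs_nonneg _)
              have b3 : cC q (n + 1) * |P q n x| ≤ cC q (n + 1) * M :=
                mul_le_mul_of_nonneg_left h1 hc0
              linarith
      have habs0 : (0:ℝ) ≤ |bC q (n + 1)| := abs_nonneg _
      calc |((q + 1) * x - q) * P q (n + 1) x - bC q (n + 1) * P q (n + 1) x
          - cC q (n + 1) * P q n x| * aC q (n + 1)
          ≤ ((q + 1) * M + |bC q (n + 1)| * M + cC q (n + 1) * M) * aC q (n + 1) :=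
            mul_le_mul_of_nonneg_right t1 ha.le
        _ ≤ (2 * (q + 1) + |bC q (n + 1)| + cC q (n + 1)) * M * aC q (n + 1) := by
            have : (q + 1) * M + |bC q (n + 1)| * M + cC q (n + 1) * M ≤
                (2 * (q + 1) + |bC q (n + 1)| + cC q (n + 1)) * M := by nlinarith
            exact mul_le_mul_of_nonneg_right this ha.le

lemma summP (hq0 : 0 < q) (hq1 : q < 1) (n : ℕ) :
    Summable (fun j : ℕ => (1 - q) * q ^ j * (P q n (1 - q ^ j)) ^ 4) := by
  obtain ⟨M, hM0, hM⟩ := bddP hq0 hq1 n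
  apply Summable.of_nonneg_of_le
  · intro j
    have h1 : (0:ℝ) ≤ (P q n (1 - q ^ j)) ^ 4 := by positivity
    have h2 : (0:ℝ) ≤ q ^ j := by positivity
    have h3 : (0:ℝ) ≤ 1 - q := by linarith
    exact mul_nonneg (mul_nonneg h3 h2) h1
  · intro j
    show (1 - q) * q ^ j * (P q n (1 - q ^ j)) ^ 4 ≤ ((1 - q) * M ^ 4) * q ^ j
    have hx0 : (0:ℝ) ≤ 1 - q ^ j := by
      have : q ^ j ≤ 1 := pow_le_one₀ hq0.le hq1.le
      linarith
    have hx1 : (1:ℝ) - q ^ j ≤ 1 := by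
      have : (0:ℝ) ≤ q ^ j := by positivity
      linarith
    have hP := (hM _ hx0 hx1).1
    have h4 : (P q n (1 - q ^ j)) ^ 4 ≤ M ^ 4 := by
      have e : (P q n (1 - q ^ j)) ^ 4 = |P q n (1 - q ^ j)| ^ 4 := by
        rw [← abs_pow]
        exact (abs_of_nonneg (by positivity)).symm
      rw [e]
      exact pow_le_pow_left₀ (abs_nonneg _) hP 4
    have hq : (0:ℝ) ≤ q ^ j := by positivity
    have h5 : (0:ℝ) ≤ (1 - q) * q ^ j := mul_nonneg (by linarith) hq
    nlinarith [mul_le_mul_of_nonneg_left h4 h5]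
  · exact (summable_geometric_of_lt_one hq0.le hq1).mul_left _

lemma haar_ge (hq0 : 0 < q) (hq1 : q < 1) (n : ℕ) : 1 / q ^ n ≤ haar q n := by
  have hp : (0:ℝ) < q ^ n := pow_pos hq0 _
  have h1q : (0:ℝ) < 1 - q := by linarith
  have h21 : q ^ (2 * n + 1) ≤ q ^ 1 := pow_le_pow_of_le_one hq0.le hq1.le (by omega)
  rw [pow_one] at h21
  unfold haar
  rw [div_le_div_iff₀ hp (mul_pos hp h1q)]
  nlinarith


end Aux

set_option maxHeartbeats 1000000 in
/-- the fourth moments `∫ pₙ⁴ dμ = h(n)² ∑ⱼ (1-q) qʲ (P_n(1-qʲ))⁴` of the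
orthonormal little q-Legendre polynomials are unbounded. -/
theorem stmt18 (q : ℝ) (hq0 : 0 < q) (hq1 : q < 1) :
    ¬ BddAbove (Set.range (fun n : ℕ =>
      (haar q n) ^ 2 * ∑' j : ℕ, (1 - q) * q ^ j * (P q n (1 - q ^ j)) ^ 4)) := by
  intro hbdd
  obtain ⟨U, hU⟩ := hbdd
  have h1q : (0:ℝ) < 1 - q := by linarith
  have hB : (0:ℝ) < 8 / (1 - q) ^ 3 := by positivity
  obtain ⟨m0, hm0⟩ := exists_pow_lt_of_lt_one (show (0:ℝ) < (1 - q) ^ 3 / 16 by positivity) hq1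
  have hBm0 : 8 / (1 - q) ^ 3 * q ^ m0 ≤ 1 / 2 := by
    have h := mul_lt_mul_of_pos_left hm0 hB
    have e : 8 / (1 - q) ^ 3 * ((1 - q) ^ 3 / 16) = 1 / 2 := by
      field_simp
      norm_num
    linarith
  have hUM : (0:ℝ) < max U 1 := lt_of_lt_of_le one_pos (le_max_right _ _)
  obtain ⟨n, hn⟩ := exists_pow_lt_of_lt_one
    (show (0:ℝ) < q ^ m0 / (16 * max U 1) by positivity) hq1
  set J := n + m0 with hJ
  have hsum := summP hq0 hq1 n
  -- termwise lower bound on the tail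
  have hterm : ∀ k : ℕ, ((1 - q) / 16 * q ^ J) * q ^ k ≤
      (1 - q) * q ^ (k + J) * (P q n (1 - q ^ (k + J))) ^ 4 := by
    intro k
    have hε : (0:ℝ) ≤ q ^ (k + J) := by positivity
    have hcond : 8 / (1 - q) ^ 3 * q ^ (k + J) ≤ q ^ n := by
      have e1 : q ^ (k + J) = q ^ k * q ^ m0 * q ^ n := by rw [hJ]; ring
      have hk1 : q ^ k ≤ 1 := pow_le_one₀ hq0.le hq1.le
      have hn0 : (0:ℝ) < q ^ n := pow_pos hq0 _
      have hm0' : (0:ℝ) < q ^ m0 := pow_pos hq0 _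
      rw [e1]
      have h2 : 8 / (1 - q) ^ 3 * (q ^ k * q ^ m0 * q ^ n) =
          (8 / (1 - q) ^ 3 * q ^ m0) * (q ^ k * q ^ n) := by ring
      rw [h2]
      have h3 : (8 / (1 - q) ^ 3 * q ^ m0) * (q ^ k * q ^ n) ≤ (1 / 2) * (q ^ k * q ^ n) :=
        mul_le_mul_of_nonneg_right hBm0 (by positivity)
      nlinarith
    obtain ⟨hD, -⟩ := key hq0 hq1 (q ^ (k + J)) hε n hcond
    have hn0 : (0:ℝ) < q ^ n := pow_pos hq0 _
    have hD2 : |1 - P q n (1 - q ^ (k + J))| ≤ 1 / 2 := by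
      have h4 : 8 / (1 - q) ^ 3 * q ^ (k + J) ≤ 1 / 2 * q ^ n := by
        have e1 : q ^ (k + J) = q ^ k * q ^ m0 * q ^ n := by rw [hJ]; ring
        have hk1 : q ^ k ≤ 1 := pow_le_one₀ hq0.le hq1.le
        rw [e1]
        have h2 : 8 / (1 - q) ^ 3 * (q ^ k * q ^ m0 * q ^ n) =
            (8 / (1 - q) ^ 3 * q ^ m0) * q ^ k * q ^ n := by ring
        rw [h2]
        have h5 : (8 / (1 - q) ^ 3 * q ^ m0) * q ^ k ≤ 1 / 2 * 1 := by
          apply mul_le_mul hBm0 hk1 (by positivity) (by norm_num)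
        nlinarith
      have := hD.trans h4
      rw [mul_comm] at this
      have := le_of_mul_le_mul_right this hn0
      linarith
    have hPhalf : (1:ℝ) / 2 ≤ P q n (1 - q ^ (k + J)) := by
      rw [abs_le] at hD2
      linarith [hD2.2]
    have hP4 : (1:ℝ) / 16 ≤ (P q n (1 - q ^ (k + J))) ^ 4 := by
      have hp2 : (1:ℝ) / 4 ≤ (P q n (1 - q ^ (k + J))) ^ 2 := by nlinarith
      nlinarith [sq_nonneg ((P q n (1 - q ^ (k + J))) ^ 2 - 1 / 4)]
    have e2 : ((1 - q) / 16 * q ^ J) * q ^ k = ((1 - q) * q ^ (k + J)) * (1 / 16) := by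
      rw [pow_add]; ring
    rw [e2]
    have h6 : (0:ℝ) ≤ (1 - q) * q ^ (k + J) := by positivity
    calc ((1 - q) * q ^ (k + J)) * (1 / 16) ≤
        ((1 - q) * q ^ (k + J)) * (P q n (1 - q ^ (k + J))) ^ 4 :=
          mul_le_mul_of_nonneg_left hP4 h6
      _ = (1 - q) * q ^ (k + J) * (P q n (1 - q ^ (k + J))) ^ 4 := by ring
  have hsumLower : Summable (fun k : ℕ => ((1 - q) / 16 * q ^ J) * q ^ k) :=
    (summable_geometric_of_lt_one hq0.le hq1).mul_left _
  have hsumTail : Summable (fun k : ℕ =>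
      (1 - q) * q ^ (k + J) * (P q n (1 - q ^ (k + J))) ^ 4) :=
    (summable_nat_add_iff J).mpr hsum
  have t1 := Summable.tsum_le_tsum hterm hsumLower hsumTail
  have t2 : ∑' k : ℕ, ((1 - q) / 16 * q ^ J) * q ^ k = q ^ J / 16 := by
    rw [tsum_mul_left, tsum_geometric_of_lt_one hq0.le hq1]
    field_simp
  have t3 : ∑' k : ℕ, (1 - q) * q ^ (k + J) * (P q n (1 - q ^ (k + J))) ^ 4 ≤
      ∑' j : ℕ, (1 - q) * q ^ j * (P q n (1 - q ^ j)) ^ 4 := by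
    have hsplit := Summable.sum_add_tsum_nat_add (f := fun j : ℕ =>
      (1 - q) * q ^ j * (P q n (1 - q ^ j)) ^ 4) J hsum
    have hfin : (0:ℝ) ≤ ∑ i ∈ Finset.range J, (1 - q) * q ^ i * (P q n (1 - q ^ i)) ^ 4 := by
      apply Finset.sum_nonneg
      intro i _
      have : (0:ℝ) ≤ (P q n (1 - q ^ i)) ^ 4 := by positivity
      have h7 : (0:ℝ) ≤ (1 - q) * q ^ i := by positivity
      nlinarith
    linarith
  have hS : q ^ J / 16 ≤ ∑' j : ℕ, (1 - q) * q ^ j * (P q n (1 - q ^ j)) ^ 4 := by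
    rw [← t2]; exact t1.trans t3
  have hhaar := haar_ge hq0 hq1 n
  have hh2 : (1 / q ^ n) ^ 2 ≤ (haar q n) ^ 2 := pow_le_pow_left₀ (by positivity) hhaar 2
  have hfn : q ^ m0 / (16 * q ^ n) ≤ (haar q n) ^ 2 *
      ∑' j : ℕ, (1 - q) * q ^ j * (P q n (1 - q ^ j)) ^ 4 := by
    have e3 : (1 / q ^ n) ^ 2 * (q ^ J / 16) = q ^ m0 / (16 * q ^ n) := by
      rw [hJ, pow_add]
      have hn0 : q ^ n ≠ 0 := (pow_pos hq0 n).ne'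
      field_simp
    rw [← e3]
    exact mul_le_mul hh2 hS (by positivity) (sq_nonneg _)
  have hfU : (haar q n) ^ 2 * ∑' j : ℕ, (1 - q) * q ^ j * (P q n (1 - q ^ j)) ^ 4 ≤ U :=
    hU (Set.mem_range_self n)
  -- but q^m0/(16 q^n) > max U 1 ≥ U
  have hgt : max U 1 < q ^ m0 / (16 * q ^ n) := by
    rw [lt_div_iff₀ (by positivity)]
    rw [lt_div_iff₀ (by positivity)] at hn
    nlinarith [pow_pos hq0 n, pow_pos hq0 m0]
  have : U < q ^ m0 / (16 * q ^ n) := lt_of_le_of_lt (le_max_left _ _) hgt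
  linarith
end
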